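/- Let A be a normed ring and let x ∈ A be an element that is not a divisor of zero. Then the multiplication map A → A, a ↦ ax, is strict (i.e. it is an open map from A onto its image xA, the image being endowed with the subspace topology) if and only if x is not a topological divisor of zero. -/

import Mathlib

/-! Both sides say that the inverse `a * x ↦ a` of the (injective) multiplication map is
continuous at `0`: for strictness this is translation invariance of the norms, and for
topological divisors of zero it is the sequential form of the same ε-δ condition. -/

open Filter Topology

/-- An element `x` is a topological divisor of zero if there is a sequence whose norms are
bounded away from `0` and whose products with `x` tend to `0`. -/
def IsTopDivZero {A : Type*} [SeminormedRing A] (x : A) : Prop :=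
  ∃ u : ℕ → A, (∃ δ > 0, ∀ n, δ ≤ ‖u n‖) ∧ Tendsto (fun n => u n * x) atTop (nhds 0)

theorem AddMonoidHom.isOpenMap_rangeFactorization_iff {E F : Type*} [SeminormedAddCommGroup E]
    [SeminormedAddCommGroup F] (f : E →+ F) (hf : Function.Injective f) :
    IsOpenMap (Set.rangeFactorization f) ↔ ∀ ε > 0, ∃ δ > 0, ∀ a, ‖f a‖ < δ → ‖a‖ < ε := by
  constructor
  · intro hopen ε hε
    have himage : IsOpen (Set.rangeFactorization f '' Metric.ball 0 ε) :=
      hopen _ Metric.isOpen_ball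
    obtain ⟨δ, hδ, hball⟩ := Metric.isOpen_iff.mp himage _
      ⟨0, Metric.mem_ball_self hε, rfl⟩
    refine ⟨δ, hδ, fun a ha => ?_⟩
    have hfa : Set.rangeFactorization f a ∈ Metric.ball (Set.rangeFactorization f 0) δ := by
      simpa [Metric.mem_ball, Subtype.dist_eq, Set.rangeFactorization] using ha
    obtain ⟨b, hb, hba⟩ := hball hfa
    obtain rfl : b = a := hf (congrArg Subtype.val hba)
    simpa using hb
  · intro hinv U hU
    rw [Metric.isOpen_iff]
    rintro _ ⟨a, haU, rfl⟩
    obtain ⟨ε, hε, hballU⟩ := Metric.isOpen_iff.mp hU a haU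
    obtain ⟨δ, hδ, hδε⟩ := hinv ε hε
    refine ⟨δ, hδ, ?_⟩
    rintro ⟨_, b, rfl⟩ hb
    have hfba : ‖f (b - a)‖ < δ := by
      simpa [Metric.mem_ball, Subtype.dist_eq, dist_eq_norm_sub, Set.rangeFactorization] using hb
    refine ⟨b, hballU ?_, rfl⟩
    simpa [Metric.mem_ball, dist_eq_norm_sub] using hδε _ hfba

theorem not_isTopDivZero_iff {A : Type*} [SeminormedRing A] (x : A) :
    ¬ IsTopDivZero x ↔ ∀ ε > 0, ∃ δ > 0, ∀ a : A, ‖a * x‖ < δ → ‖a‖ < ε := by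
  constructor
  · intro hx ε hε
    by_contra! h
    choose u hux hu using fun n : ℕ => h (1 / (n + 1)) (by positivity)
    refine hx ⟨u, ⟨ε, hε, hu⟩, ?_⟩
    rw [tendsto_zero_iff_norm_tendsto_zero]
    exact squeeze_zero (fun n => norm_nonneg _) (fun n => (hux n).le)
      tendsto_one_div_add_atTop_nhds_zero_nat
  · rintro h ⟨u, ⟨ε, hε, hu⟩, hux⟩
    obtain ⟨δ, hδ, hδε⟩ := h ε hε
    obtain ⟨n, hn⟩ := (hux.eventually (eventually_norm_sub_lt 0 hδ)).exists
    exact (hu n).not_gt (hδε _ (by simpa using hn))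

theorem mul_strict_iff_not_topDivZero {A : Type*} [NormedCommRing A]
    (x : A) (hx : ∀ a : A, a * x = 0 → a = 0) :
    IsOpenMap (Set.rangeFactorization (fun a : A => a * x)) ↔ ¬ IsTopDivZero x := by
  have hinj : Function.Injective (AddMonoidHom.mulRight x) := fun a b hab =>
    sub_eq_zero.mp (hx _ (by rw [sub_mul]; exact sub_eq_zero.mpr hab))
  exact ((AddMonoidHom.mulRight x).isOpenMap_rangeFactorization_iff hinj).trans
    (not_isTopDivZero_iff x).symm
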